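/- arXiv:1104.1376 — 2 statements merged into one kernel-verified Lean document; each statement's English description precedes it below -/
import Mathlib

section
/- Let n ≥ 1, let V be a real inner product space, let ζ ∈ V, let v ∈ V with ‖v‖ < 1, and let z ∈ ℂ with Im z ≠ 0. Then ‖ζ‖² − 2z⟨ζ,v⟩ − (1 − ‖v‖²)z² ≠ 0 (as a complex number, where ‖ζ‖², ⟨ζ,v⟩ are real scalars). -/
/-- Writing `z = x + iy` with `y ≠ 0`, the imaginary part `-2y(b + cx)` forces `b = -cx`, and then the
real part is `a + c(x² + y²) > 0`. -/
theorem Complex.ofReal_sub_two_mul_sub_mul_sq_ne_zero {a b c : ℝ} (ha : 0 ≤ a) (hc : 0 < c)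
    {z : ℂ} (hz : z.im ≠ 0) : (a : ℂ) - 2 * z * b - c * z ^ 2 ≠ 0 := by
  intro h
  have him : (b + c * z.re) * z.im = 0 := by
    have := congrArg Complex.im h
    simp only [sub_im, mul_im, ofReal_re, ofReal_im, sq, re_ofNat, im_ofNat, zero_im] at this
    linear_combination -this / 2
  have hb : b = -(c * z.re) := eq_neg_of_add_eq_zero_left ((mul_eq_zero.mp him).resolve_right hz)
  have hre : a + c * (z.re ^ 2 + z.im ^ 2) = 0 := by
    have := congrArg Complex.re h
    simp only [sub_re, mul_re, ofReal_re, ofReal_im, sq, re_ofNat, im_ofNat, zero_re] at this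
    rw [hb] at this
    linear_combination this
  have hpos : 0 < a + c * (z.re ^ 2 + z.im ^ 2) := by positivity
  exact hpos.ne' hre

theorem stmt_0_general
    {V : Type*} [NormedAddCommGroup V] [InnerProductSpace ℝ V]
    (ζ v : V) (hv : ‖v‖ < 1) (z : ℂ) (hz : z.im ≠ 0) :
    ((‖ζ‖ ^ 2 : ℝ) : ℂ) - 2 * z * ((inner ℝ ζ v : ℝ) : ℂ)
      - (1 - (‖v‖ ^ 2 : ℝ)) * z ^ 2 ≠ 0 := by
  have hc : 0 < 1 - ‖v‖ ^ 2 := sub_pos.mpr (pow_lt_one₀ (norm_nonneg v) hv two_ne_zero)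
  have key := Complex.ofReal_sub_two_mul_sub_mul_sq_ne_zero (sq_nonneg ‖ζ‖) hc hz (b := inner ℝ ζ v)
  exact_mod_cast key

/-- Semiclassical ellipticity of the conjugated symbol
`‖ζ‖² − 2z⟨ζ,v⟩ − (1 − ‖v‖²)z²` for non-real `z`, when `‖v‖ < 1`. -/
theorem stmt_0 (n : ℕ) (hn : 1 ≤ n)
    {V : Type*} [NormedAddCommGroup V] [InnerProductSpace ℝ V]
    (ζ v : V) (hv : ‖v‖ < 1) (z : ℂ) (hz : z.im ≠ 0) :
    ((‖ζ‖ ^ 2 : ℝ) : ℂ) - 2 * z * ((inner ℝ ζ v : ℝ) : ℂ)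
      - (1 - (‖v‖ ^ 2 : ℝ)) * z ^ 2 ≠ 0 :=
  stmt_0_general ζ v hv z hz
end

section
/- Let z ∈ ℂ with Im z ≠ 0, let μ > −1, ξ ∈ ℝ, η ∈ ℝ^{n−1}, and set p_{ℏ,z} = 4μξ² − 4zξ − z² + ‖η‖². If Im p_{ℏ,z} = 0 and (z, η) ≠ (0, 0), then Re p_{ℏ,z} = (1 + μ)(Re z)² + (Im z)² + ‖η‖² > 0; in particular p_{ℏ,z} ≠ 0. Hence for Im z ≠ 0 the symbol p_{ℏ,z} is elliptic (nonvanishing) on {μ > −1}. -/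
/-!
Writing `p = 4μξ² − 4zξ − z² + s` out, `Im p = −2 (Im z)(2ξ + Re z)`. So when `Im z ≠ 0`, the
vanishing of `Im p` pins `ξ = −Re z / 2`, and substituting gives
`Re p = (1 + μ)(Re z)² + (Im z)² + s`, which is positive for `μ > −1` and `s ≥ 0`.
-/

namespace SemiclassicalSymbol

/-- The model symbol `p_{ℏ,z}`, with `s` standing for `‖η‖²`. -/
noncomputable def symbol (μ ξ : ℝ) (z : ℂ) (s : ℝ) : ℂ :=
  ((4 * μ * ξ ^ 2 : ℝ) : ℂ) - 4 * z * (ξ : ℂ) - z ^ 2 + (s : ℂ)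

variable {μ ξ s : ℝ} {z : ℂ}

theorem symbol_im : (symbol μ ξ z s).im = -2 * z.im * (2 * ξ + z.re) := by
  simp only [symbol, Complex.add_im, Complex.sub_im, Complex.ofReal_im, Complex.mul_im,
    Complex.ofReal_re, pow_two, Complex.mul_re]
  norm_num
  ring

theorem symbol_re :
    (symbol μ ξ z s).re = 4 * μ * ξ ^ 2 - 4 * z.re * ξ - (z.re ^ 2 - z.im ^ 2) + s := by
  simp only [symbol, Complex.add_re, Complex.sub_re, Complex.ofReal_re, Complex.mul_re,
    Complex.ofReal_im, pow_two, Complex.mul_im]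
  norm_num

theorem eq_neg_re_div_two_of_symbol_im_eq_zero (hz : z.im ≠ 0)
    (h : (symbol μ ξ z s).im = 0) : ξ = -z.re / 2 := by
  rw [symbol_im, mul_eq_zero, mul_eq_zero] at h
  rcases h with (h | h) | h
  · norm_num at h
  · exact absurd h hz
  · linarith

theorem symbol_re_of_symbol_im_eq_zero (hz : z.im ≠ 0) (h : (symbol μ ξ z s).im = 0) :
    (symbol μ ξ z s).re = (1 + μ) * z.re ^ 2 + z.im ^ 2 + s := by
  rw [symbol_re, eq_neg_re_div_two_of_symbol_im_eq_zero hz h]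
  ring

theorem symbol_re_pos_of_symbol_im_eq_zero (hz : z.im ≠ 0) (hμ : -1 < μ) (hs : 0 ≤ s)
    (h : (symbol μ ξ z s).im = 0) : 0 < (symbol μ ξ z s).re := by
  rw [symbol_re_of_symbol_im_eq_zero hz h]
  have : 0 ≤ (1 + μ) * z.re ^ 2 := mul_nonneg (by linarith) (sq_nonneg _)
  positivity

theorem symbol_ne_zero (hz : z.im ≠ 0) (hμ : -1 < μ) (hs : 0 ≤ s) : symbol μ ξ z s ≠ 0 := by
  intro h0
  have him : (symbol μ ξ z s).im = 0 := by rw [h0, Complex.zero_im]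
  have hre := symbol_re_pos_of_symbol_im_eq_zero hz hμ hs him
  rw [h0, Complex.zero_re] at hre
  exact lt_irrefl 0 hre

end SemiclassicalSymbol

/-- Semiclassical ellipticity of `p_{ℏ,z} = 4μξ² − 4zξ − z² + ‖η‖²` on `{μ > −1}`
for `Im z ≠ 0`: if `Im p_{ℏ,z} = 0` and `(z,η) ≠ (0,0)` then
`Re p_{ℏ,z} = (1+μ)(Re z)² + (Im z)² + ‖η‖² > 0`; in any case `p_{ℏ,z} ≠ 0`. -/
theorem stmt_10 (n : ℕ) (z : ℂ) (hz : z.im ≠ 0) (μ ξ : ℝ) (hμ : -1 < μ)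
    (η : EuclideanSpace ℝ (Fin (n - 1))) :
    ((((4 * μ * ξ ^ 2 : ℝ) : ℂ) - 4 * z * (ξ : ℂ) - z ^ 2
          + ((‖η‖ ^ 2 : ℝ) : ℂ)).im = 0 → ¬(z = 0 ∧ η = 0) →
      (((4 * μ * ξ ^ 2 : ℝ) : ℂ) - 4 * z * (ξ : ℂ) - z ^ 2
          + ((‖η‖ ^ 2 : ℝ) : ℂ)).re
        = (1 + μ) * z.re ^ 2 + z.im ^ 2 + ‖η‖ ^ 2 ∧
      0 < (((4 * μ * ξ ^ 2 : ℝ) : ℂ) - 4 * z * (ξ : ℂ) - z ^ 2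
          + ((‖η‖ ^ 2 : ℝ) : ℂ)).re) ∧
    ((4 * μ * ξ ^ 2 : ℝ) : ℂ) - 4 * z * (ξ : ℂ) - z ^ 2
        + ((‖η‖ ^ 2 : ℝ) : ℂ) ≠ 0 := by
  have hs : 0 ≤ ‖η‖ ^ 2 := sq_nonneg _
  exact ⟨fun him _ => ⟨SemiclassicalSymbol.symbol_re_of_symbol_im_eq_zero hz him,
      SemiclassicalSymbol.symbol_re_pos_of_symbol_im_eq_zero hz hμ hs him⟩,
    SemiclassicalSymbol.symbol_ne_zero hz hμ hs⟩
end
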